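/- For the DVDM scheme for the Zakharov equations, the discrete energy E_D^(m) := ‖δ⁺ₓE^(m)‖² + (1/2)(‖N^(m)‖² + ‖δ⁺ₓV^(m)‖²) + ⟨N^(m), |E^(m)|²⟩ is conserved: E_D^(m+1) = E_D^(m) whenever (E^(m), N^(m), V^(m)) and (E^(m+1), N^(m+1), V^(m+1)) are K-periodic and satisfy all three DVDM equations. -/

import Mathlib

/-!
Test the Schrödinger step against the conjugate of `E^(m+1) - E^(m)` and take real parts: the
time-difference term becomes `i |E^(m+1) - E^(m)|² / Δt`, which is purely imaginary, and periodic
summation by parts turns the discrete Laplacian into the change of `‖δ⁺ₓE‖²`. Likewise, eliminating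
`Δt` between the two wave equations and summing by parts gives the change of `‖N‖² + ‖δ⁺ₓV‖²`.
The two coupling terms left over, `μ⁺ₜN · δ⁺ₜ|E|²` and `δ⁺ₜN · μ⁺ₜ|E|²`, add up to the change of
`⟨N, |E|²⟩` with the opposite sign.
-/

noncomputable def discreteEnergy (K : ℕ) (Δx : ℝ) (E : ℤ → ℂ) (N V : ℤ → ℝ) : ℝ :=
  Δx * ∑ k ∈ Finset.range K,
      ‖(E ((k : ℤ) + 1 + 1) - E ((k : ℤ) + 1)) / (Δx : ℂ)‖ ^ 2
    + (1 / 2) * (Δx * ∑ k ∈ Finset.range K, N ((k : ℤ) + 1) ^ 2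
      + Δx * ∑ k ∈ Finset.range K, ((V ((k : ℤ) + 1 + 1) - V ((k : ℤ) + 1)) / Δx) ^ 2)
    + Δx * ∑ k ∈ Finset.range K, N ((k : ℤ) + 1) * ‖E ((k : ℤ) + 1)‖ ^ 2

open Finset Complex ComplexConjugate

namespace Function.Periodic

variable {K : ℕ}

theorem sum_range_add_one {M : Type*} [AddCancelCommMonoid M] {f : ℤ → M} (hf : Periodic f K)
    (a : ℤ) : ∑ k ∈ range K, f (k + a + 1) = ∑ k ∈ range K, f (k + a) := by
  have h := (sum_range_succ' (fun k : ℕ => f (k + a)) K).symm.trans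
    (sum_range_succ (fun k : ℕ => f (k + a)) K)
  rw [show f ((K : ℤ) + a) = f ((0 : ℕ) + a) by rw [add_comm, hf]; simp] at h
  simpa only [Nat.cast_succ, add_right_comm _ (1 : ℤ) a] using add_right_cancel h

theorem sum_range_secondDiff_mul {R : Type*} [CommRing R] {f g : ℤ → R}
    (hf : Periodic f K) (hg : Periodic g K) (a : ℤ) :
    ∑ k ∈ range K, (f (k + a + 1) - 2 * f (k + a) + f (k + a - 1)) * g (k + a)
      = -∑ k ∈ range K, (f (k + a + 1) - f (k + a)) * (g (k + a + 1) - g (k + a)) := by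
  have hshift := ((hf.sub (hf.sub_const 1)).mul hg).sum_range_add_one a
  simp only [Pi.mul_apply, Pi.sub_apply, add_sub_cancel_right] at hshift
  rw [eq_neg_iff_add_eq_zero, ← sum_add_distrib, ← sub_eq_zero.mpr hshift, ← sum_sub_distrib]
  exact sum_congr rfl fun k _ => by ring

end Function.Periodic

theorem Complex.re_add_mul_conj_sub (u v : ℂ) :
    ((u + v) * conj (u - v)).re = ‖u‖ ^ 2 - ‖v‖ ^ 2 := by
  simp only [mul_re, add_re, add_im, conj_re, conj_im, sub_re, sub_im, Complex.sq_norm,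
    normSq_apply]
  ring

theorem re_mul_conj_sub_of_schrodinger_step {Δt Δx n : ℝ} (hΔx : Δx ≠ 0) {u v L : ℂ}
    (h : I * ((u - v) / Δt) = -(L / 2 / (Δx : ℂ) ^ 2) + n * ((u + v) / 2)) :
    (L * conj (u - v)).re = Δx ^ 2 * n * (‖u‖ ^ 2 - ‖v‖ ^ 2) := by
  -- `(u - v) * conj (u - v)` is real, so the time-difference term contributes nothing.
  have hI : (I * ((u - v) / Δt) * conj (u - v)).re = 0 := by
    rw [mul_assoc, div_mul_eq_mul_div, mul_conj, ← ofReal_div, re_mul_ofReal, I_re, zero_mul]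
  have hsplit : (-(L / 2 / (Δx : ℂ) ^ 2) + n * ((u + v) / 2)) * conj (u - v)
      = ((-(1 / (2 * Δx ^ 2)) : ℝ) : ℂ) * (L * conj (u - v))
        + ((n / 2 : ℝ) : ℂ) * ((u + v) * conj (u - v)) := by
    push_cast; ring
  rw [h, hsplit, add_re, re_ofReal_mul, re_ofReal_mul, re_add_mul_conj_sub] at hI
  field_simp at hI
  linear_combination -hI

section

variable {K : ℕ} {Δt Δx : ℝ}

theorem sum_sq_norm_diff_sub_of_schrodinger_step {E₀ E₁ : ℤ → ℂ} {n : ℤ → ℝ}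
    (h₀ : Function.Periodic E₀ K) (h₁ : Function.Periodic E₁ K) (hΔx : Δx ≠ 0)
    (hstep : ∀ k : ℤ, I * ((E₁ k - E₀ k) / Δt)
      = -(((E₁ (k + 1) + E₀ (k + 1)) / 2 - 2 * ((E₁ k + E₀ k) / 2)
            + (E₁ (k - 1) + E₀ (k - 1)) / 2) / (Δx : ℂ) ^ 2)
        + (n k : ℂ) * ((E₁ k + E₀ k) / 2)) (a : ℤ) :
    ∑ k ∈ range K, ‖E₁ (k + a + 1) - E₁ (k + a)‖ ^ 2
        - ∑ k ∈ range K, ‖E₀ (k + a + 1) - E₀ (k + a)‖ ^ 2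
      = -Δx ^ 2 * ∑ k ∈ range K, n (k + a) * (‖E₁ (k + a)‖ ^ 2 - ‖E₀ (k + a)‖ ^ 2) := by
  have hsbp := congrArg re <|
    (h₁.add h₀).sum_range_secondDiff_mul ((h₁.sub h₀).comp (starRingEnd ℂ)) a
  simp only [Pi.add_apply, Pi.sub_apply, Function.comp_apply, re_sum, neg_re] at hsbp
  have hlhs : ∀ k : ℤ, ((E₁ (k + 1) + E₀ (k + 1) - 2 * (E₁ k + E₀ k) + (E₁ (k - 1) + E₀ (k - 1)))
      * conj (E₁ k - E₀ k)).re = Δx ^ 2 * (n k * (‖E₁ k‖ ^ 2 - ‖E₀ k‖ ^ 2)) := fun k => by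
    rw [re_mul_conj_sub_of_schrodinger_step (n := n k) hΔx ((hstep k).trans (by ring)), mul_assoc]
  have hrhs : ∀ k : ℤ, ((E₁ (k + 1) + E₀ (k + 1) - (E₁ k + E₀ k))
      * (conj (E₁ (k + 1) - E₀ (k + 1)) - conj (E₁ k - E₀ k))).re
      = ‖E₁ (k + 1) - E₁ k‖ ^ 2 - ‖E₀ (k + 1) - E₀ k‖ ^ 2 := fun k => by
    rw [← map_sub, ← re_add_mul_conj_sub]; ring_nf
  simp only [hlhs, hrhs, ← mul_sum, sum_sub_distrib] at hsbp
  linear_combination hsbp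

theorem sum_sq_sub_of_wave_step {N₀ N₁ V₀ V₁ s : ℤ → ℝ}
    (h₀ : Function.Periodic V₀ K) (h₁ : Function.Periodic V₁ K) (hΔx : Δx ≠ 0)
    (hN : ∀ k : ℤ, (N₁ k - N₀ k) / Δt
      = ((V₁ (k + 1) + V₀ (k + 1)) / 2 - 2 * ((V₁ k + V₀ k) / 2)
          + (V₁ (k - 1) + V₀ (k - 1)) / 2) / Δx ^ 2)
    (hV : ∀ k : ℤ, (V₁ k - V₀ k) / Δt = (N₁ k + N₀ k) / 2 + s k) (a : ℤ) :
    Δx ^ 2 * (∑ k ∈ range K, N₁ (k + a) ^ 2 - ∑ k ∈ range K, N₀ (k + a) ^ 2)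
        + (∑ k ∈ range K, (V₁ (k + a + 1) - V₁ (k + a)) ^ 2
          - ∑ k ∈ range K, (V₀ (k + a + 1) - V₀ (k + a)) ^ 2)
      = -2 * Δx ^ 2 * ∑ k ∈ range K, (N₁ (k + a) - N₀ (k + a)) * s (k + a) := by
  have hsbp := (h₁.add h₀).sum_range_secondDiff_mul (h₁.sub h₀) a
  simp only [Pi.add_apply, Pi.sub_apply] at hsbp
  have hpoint : ∀ k : ℤ,
      (V₁ (k + 1) + V₀ (k + 1) - 2 * (V₁ k + V₀ k) + (V₁ (k - 1) + V₀ (k - 1))) * (V₁ k - V₀ k)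
        = Δx ^ 2 * (N₁ k ^ 2 - N₀ k ^ 2) + 2 * Δx ^ 2 * ((N₁ k - N₀ k) * s k) := fun k => by
    -- Both sides are `(N₁ - N₀) (V₁ - V₀) / Δt`; substituting the two steps eliminates `Δt`.
    have hcross :
        (N₁ k - N₀ k) * ((V₁ k - V₀ k) / Δt) = (V₁ k - V₀ k) * ((N₁ k - N₀ k) / Δt) := by
      ring
    rw [hV, hN] at hcross
    field_simp at hcross
    linear_combination -hcross
  have hdiff : ∀ k : ℤ,
      (V₁ (k + 1) + V₀ (k + 1) - (V₁ k + V₀ k)) * (V₁ (k + 1) - V₀ (k + 1) - (V₁ k - V₀ k))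
        = (V₁ (k + 1) - V₁ k) ^ 2 - (V₀ (k + 1) - V₀ k) ^ 2 := fun k => by ring
  simp only [hpoint, hdiff, sum_add_distrib, ← mul_sum, sum_sub_distrib] at hsbp
  linear_combination hsbp

end

theorem dvdm_energy_conservation_general (K : ℕ) (Δt Δx : ℝ)
    (hΔx : 0 < Δx) (Em Em1 : ℤ → ℂ) (Nm Nm1 Vm Vm1 : ℤ → ℝ)
    (hEm : ∀ k : ℤ, Em (k + K) = Em k) (hEm1 : ∀ k : ℤ, Em1 (k + K) = Em1 k)
    (hVm : ∀ k : ℤ, Vm (k + K) = Vm k) (hVm1 : ∀ k : ℤ, Vm1 (k + K) = Vm1 k)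
    (hscheme1 : ∀ k : ℤ,
      Complex.I * ((Em1 k - Em k) / (Δt : ℂ))
        = -(((Em1 (k + 1) + Em (k + 1)) / 2 - 2 * ((Em1 k + Em k) / 2)
              + (Em1 (k - 1) + Em (k - 1)) / 2) / ((Δx : ℂ) ^ 2))
          + (((Nm1 k + Nm k) / 2 : ℝ) : ℂ) * ((Em1 k + Em k) / 2))
    (hscheme2 : ∀ k : ℤ,
      (Nm1 k - Nm k) / Δt
        = ((Vm1 (k + 1) + Vm (k + 1)) / 2 - 2 * ((Vm1 k + Vm k) / 2)
            + (Vm1 (k - 1) + Vm (k - 1)) / 2) / Δx ^ 2)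
    (hscheme3 : ∀ k : ℤ,
      (Vm1 k - Vm k) / Δt
        = (Nm1 k + Nm k) / 2
          + (‖Em1 k‖ ^ 2 + ‖Em k‖ ^ 2) / 2) :
    discreteEnergy K Δx Em1 Nm1 Vm1 = discreteEnergy K Δx Em Nm Vm := by
  have hschrodinger := sum_sq_norm_diff_sub_of_schrodinger_step hEm hEm1 hΔx.ne' hscheme1 1
  have hwave := sum_sq_sub_of_wave_step hVm hVm1 hΔx.ne' hscheme2 hscheme3 1
  have hcoupling : ∑ k ∈ range K, Nm1 (k + 1) * ‖Em1 (k + 1)‖ ^ 2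
        - ∑ k ∈ range K, Nm (k + 1) * ‖Em (k + 1)‖ ^ 2
      = ∑ k ∈ range K,
            (Nm1 (k + 1) + Nm (k + 1)) / 2 * (‖Em1 (k + 1)‖ ^ 2 - ‖Em (k + 1)‖ ^ 2)
        + ∑ k ∈ range K,
            (Nm1 (k + 1) - Nm (k + 1)) * ((‖Em1 (k + 1)‖ ^ 2 + ‖Em (k + 1)‖ ^ 2) / 2) := by
    rw [← sum_sub_distrib, ← sum_add_distrib]
    exact sum_congr rfl fun k _ => by ring
  unfold discreteEnergy
  simp only [norm_div, norm_real, Real.norm_of_nonneg hΔx.le, div_pow, ← sum_div]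
  field_simp
  linear_combination 2 * hschrodinger + hwave + 2 * Δx ^ 2 * hcoupling

theorem dvdm_energy_conservation (K : ℕ) (hK : 1 ≤ K) (Δt Δx : ℝ) (hΔt : 0 < Δt)
    (hΔx : 0 < Δx) (Em Em1 : ℤ → ℂ) (Nm Nm1 Vm Vm1 : ℤ → ℝ)
    (hEm : ∀ k : ℤ, Em (k + K) = Em k) (hEm1 : ∀ k : ℤ, Em1 (k + K) = Em1 k)
    (hNm : ∀ k : ℤ, Nm (k + K) = Nm k) (hNm1 : ∀ k : ℤ, Nm1 (k + K) = Nm1 k)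
    (hVm : ∀ k : ℤ, Vm (k + K) = Vm k) (hVm1 : ∀ k : ℤ, Vm1 (k + K) = Vm1 k)
    (hscheme1 : ∀ k : ℤ,
      Complex.I * ((Em1 k - Em k) / (Δt : ℂ))
        = -(((Em1 (k + 1) + Em (k + 1)) / 2 - 2 * ((Em1 k + Em k) / 2)
              + (Em1 (k - 1) + Em (k - 1)) / 2) / ((Δx : ℂ) ^ 2))
          + (((Nm1 k + Nm k) / 2 : ℝ) : ℂ) * ((Em1 k + Em k) / 2))
    (hscheme2 : ∀ k : ℤ,
      (Nm1 k - Nm k) / Δt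
        = ((Vm1 (k + 1) + Vm (k + 1)) / 2 - 2 * ((Vm1 k + Vm k) / 2)
            + (Vm1 (k - 1) + Vm (k - 1)) / 2) / Δx ^ 2)
    (hscheme3 : ∀ k : ℤ,
      (Vm1 k - Vm k) / Δt
        = (Nm1 k + Nm k) / 2
          + (‖Em1 k‖ ^ 2 + ‖Em k‖ ^ 2) / 2) :
    discreteEnergy K Δx Em1 Nm1 Vm1 = discreteEnergy K Δx Em Nm Vm :=
  dvdm_energy_conservation_general K Δt Δx hΔx Em Em1 Nm Nm1 Vm Vm1 hEm hEm1 hVm hVm1 hscheme1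
    hscheme2 hscheme3
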